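/- For a nonempty subset Ω ⊆ Ĩ with ξ = inf{μ_α − ν_α : ⟨μ_α,ν_α⟩ ∈ Ω}, if ξ is not attained by any element of Ω, then the element ⟨(1+ξ)/2, (1−ξ)/2⟩ is the greatest lower bound of Ω under ≤_XY. -/
import Mathlib


/-- The set of intuitionistic fuzzy values Ĩ = {⟨μ,ν⟩ ∈ [0,1]² : μ + ν ≤ 1}. -/
def IFV : Set (ℝ × ℝ) :=
  {p | 0 ≤ p.1 ∧ p.1 ≤ 1 ∧ 0 ≤ p.2 ∧ p.2 ≤ 1 ∧ p.1 + p.2 ≤ 1}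

/-- Score function s(α) = μ_α − ν_α. -/
def sc (p : ℝ × ℝ) : ℝ := p.1 - p.2

/-- Accuracy function h(α) = μ_α + ν_α. -/
def ac (p : ℝ × ℝ) : ℝ := p.1 + p.2

/-- Strict Xu–Yager order. -/
def ltXY (a b : ℝ × ℝ) : Prop := sc a < sc b ∨ (sc a = sc b ∧ ac a < ac b)

/-- Nonstrict Xu–Yager order. -/
def leXY (a b : ℝ × ℝ) : Prop := sc a < sc b ∨ (sc a = sc b ∧ ac a ≤ ac b)

/-- If the infimum ξ of the scores of a nonempty Ω ⊆ Ĩ is not attained,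
then ⟨(1+ξ)/2, (1−ξ)/2⟩ is the greatest lower bound of Ω under ≤_XY. -/
theorem glb_of_score_inf_not_attained (Ω : Set (ℝ × ℝ)) (hΩ : Ω ⊆ IFV)
    (hne : Ω.Nonempty) (ξ : ℝ) (hglb : IsGLB (sc '' Ω) ξ) (hna : ξ ∉ sc '' Ω) :
    ((1 + ξ) / 2, (1 - ξ) / 2) ∈ IFV ∧
    (∀ a ∈ Ω, leXY ((1 + ξ) / 2, (1 - ξ) / 2) a) ∧
    ∀ b ∈ IFV, (∀ a ∈ Ω, leXY b a) → leXY b ((1 + ξ) / 2, (1 - ξ) / 2) := by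
  obtain ⟨a₀, ha₀⟩ := hne
  have hlb : ∀ a ∈ Ω, ξ ≤ sc a := fun a ha => hglb.1 ⟨a, ha, rfl⟩
  have hslt : ∀ a ∈ Ω, ξ < sc a := by
    intro a ha
    rcases lt_or_eq_of_le (hlb a ha) with h | h
    · exact h
    · exact absurd ⟨a, ha, h.symm⟩ hna
  have ha₀m := hΩ ha₀
  obtain ⟨h1, h2, h3, h4, h5⟩ := ha₀m
  have hξle : ξ ≤ 1 := le_trans (hlb a₀ ha₀) (by simp [sc]; linarith)
  have hξge : -1 ≤ ξ := by
    apply hglb.2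
    intro x hx
    obtain ⟨a, ha, rfl⟩ := hx
    obtain ⟨g1, g2, g3, g4, g5⟩ := hΩ ha
    simp [sc]; linarith
  refine ⟨⟨by linarith, by linarith, by linarith, by linarith, by simp; linarith⟩, ?_, ?_⟩
  · intro a ha
    left
    have hcsc : sc ((1 + ξ) / 2, (1 - ξ) / 2) = ξ := by simp [sc]; ring
    rw [hcsc]; exact hslt a ha
  · intro b hb hlbb
    have hsb : sc b ≤ ξ := by
      apply hglb.2
      intro x hx
      obtain ⟨a, ha, rfl⟩ := hx
      rcases hlbb a ha with h | h
      · exact h.le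
      · exact h.1.le
    have hcsc : sc ((1 + ξ) / 2, (1 - ξ) / 2) = ξ := by simp [sc]; ring
    rcases lt_or_eq_of_le hsb with h | h
    · left; rw [hcsc]; exact h
    · right
      refine ⟨by rw [hcsc, h], ?_⟩
      obtain ⟨g1, g2, g3, g4, g5⟩ := hb
      simp [ac]; linarith
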